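/- Let V be a real Banach space, W ⊆ V a closed subspace, m, N ∈ ℕ, w = (w_j)_{j=1}^N positive weights and k > 0. Suppose the matrix A ∈ ℝ^{m×N}, regarded as an operator W^N → W^m, has the weighted robust null space property over W of order (k,w) with constants 0 ≤ ρ < 1 and γ > 0. Let x ∈ W^N, f ∈ V^m, e := A x − f, and let 0 < λ ≤ (1+ρ)²/((3+ρ)γ√k). Define G(z) := λ‖z‖_{1,w;V} + ‖A z − f‖_{2;V} for z ∈ W^N. Then for every x̃ ∈ W^N, ‖x̃ − x‖_{2;V} ≤ (C₁′/√k)·(2σ_k(x)_{1,w;V} + (G(x̃) − G(x))/λ) + (C₁′/(√k·λ) + C₂′)·‖e‖_{2;V}, where C₁′ = (1+ρ)²/(1−ρ) and C₂′ = (3+ρ)γ/(1−ρ). -/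

import Mathlib

/-!
Write `v = x̃ - x` and let `S` attain `σ_k(x)`. On `S` the null space property and Cauchy–Schwarz
bound `‖v_S‖_{1,w}` by `ρ ‖v_{Sᶜ}‖_{1,w} + γ √k ‖A v‖₂`, while the triangle inequality gives
`‖v_{Sᶜ}‖_{1,w} ≤ ‖x̃‖_{1,w} - ‖x‖_{1,w} + 2 σ_k(x) + ‖v_S‖_{1,w}`; together they bound
`‖v‖_{1,w}`. Applying the null space property once more, on the coordinates where
`‖v_j‖ > w_j ‖v‖_{1,w} / k` (a set of weighted size at most `k`), bounds `‖v‖₂` by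
`(1 + ρ) ‖v‖_{1,w} / √k + γ ‖A v‖₂`. Finally
`λ (‖x̃‖_{1,w} - ‖x‖_{1,w}) = G(x̃) - G(x) + ‖e‖₂ - ‖A x̃ - f‖₂` and `‖A v‖₂ ≤ ‖A x̃ - f‖₂ + ‖e‖₂`;
the bound on `λ` is exactly what makes the coefficient of `‖A x̃ - f‖₂` nonpositive.
-/

open Finset

/-- The ℓ²-norm `‖x‖_{2;V}` of a tuple `x ∈ V^N`. -/
noncomputable def norm2V {V : Type*} [NormedAddCommGroup V] {N : ℕ} (x : Fin N → V) : ℝ :=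
  Real.sqrt (∑ j, ‖x j‖ ^ 2)

/-- The weighted ℓ¹-norm `‖x‖_{1,w;V}` of a tuple `x ∈ V^N`. -/
noncomputable def norm1wV {V : Type*} [NormedAddCommGroup V] {N : ℕ} (w : Fin N → ℝ)
    (x : Fin N → V) : ℝ :=
  ∑ j, w j * ‖x j‖

/-- The action of a matrix `A ∈ ℝ^{m×N}` on `V^N`, giving an element of `V^m`. -/
noncomputable def matVec {V : Type*} [NormedAddCommGroup V] [NormedSpace ℝ V] {m N : ℕ}
    (A : Matrix (Fin m) (Fin N) ℝ) (x : Fin N → V) : Fin m → V :=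
  fun i => ∑ j, A i j • x j

/-- `x_S`: the vector agreeing with `x` on `S` and vanishing outside `S`. -/
noncomputable def restrictTo {V : Type*} [NormedAddCommGroup V] {N : ℕ} (x : Fin N → V)
    (S : Finset (Fin N)) : Fin N → V :=
  fun j => if j ∈ S then x j else 0

/-- The weighted cardinality `|S|_w = Σ_{j∈S} w_j²`. -/
def wCard {N : ℕ} (w : Fin N → ℝ) (S : Finset (Fin N)) : ℝ :=
  ∑ j ∈ S, w j ^ 2

/-- `A` has the weighted robust null space property over the subset `W ⊆ V`
of order `(k, w)` with constants `ρ` and `γ`. -/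
def WRNSP {V : Type*} [NormedAddCommGroup V] [NormedSpace ℝ V] {m N : ℕ}
    (A : Matrix (Fin m) (Fin N) ℝ) (W : Set V) (k : ℝ) (w : Fin N → ℝ) (ρ γ : ℝ) : Prop :=
  ∀ x : Fin N → V, (∀ j, x j ∈ W) → ∀ S : Finset (Fin N), wCard w S ≤ k →
    norm2V (restrictTo x S) ≤
      ρ / Real.sqrt k * norm1wV w (restrictTo x Sᶜ) + γ * norm2V (matVec A x)

/-- The weighted best `(k,w)`-term approximation error `σ_k(x)_{1,w;V}`. -/
noncomputable def sigmaK {V : Type*} [NormedAddCommGroup V] {N : ℕ} (w : Fin N → ℝ) (k : ℝ)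
    (x : Fin N → V) : ℝ :=
  sInf {t : ℝ | ∃ S : Finset (Fin N), wCard w S ≤ k ∧ t = norm1wV w (restrictTo x Sᶜ)}

section Norms

variable {V : Type*} [NormedAddCommGroup V] {N : ℕ}

lemma norm2V_eq_norm_toLp (x : Fin N → V) :
    norm2V x = ‖(WithLp.toLp 2 x : PiLp 2 fun _ : Fin N => V)‖ := by
  rw [PiLp.norm_eq_of_L2]
  rfl

lemma norm2V_nonneg (x : Fin N → V) : 0 ≤ norm2V x := Real.sqrt_nonneg _

lemma norm2V_add_le (x y : Fin N → V) : norm2V (x + y) ≤ norm2V x + norm2V y := by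
  simpa only [norm2V_eq_norm_toLp, WithLp.toLp_add] using norm_add_le _ _

lemma norm2V_sub_le (x y : Fin N → V) : norm2V (x - y) ≤ norm2V x + norm2V y := by
  simpa only [norm2V_eq_norm_toLp, WithLp.toLp_sub] using norm_sub_le _ _

lemma restrictTo_add_restrictTo_compl (x : Fin N → V) (S : Finset (Fin N)) :
    restrictTo x S + restrictTo x Sᶜ = x := by
  funext j
  by_cases hj : j ∈ S <;> simp [restrictTo, hj]

lemma norm2V_restrictTo (x : Fin N → V) (S : Finset (Fin N)) :
    norm2V (restrictTo x S) = √(∑ j ∈ S, ‖x j‖ ^ 2) := by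
  simp only [norm2V, restrictTo, apply_ite norm, norm_zero, ite_pow, zero_pow two_ne_zero,
    sum_ite_mem, univ_inter]

lemma norm1wV_restrictTo (w : Fin N → ℝ) (x : Fin N → V) (S : Finset (Fin N)) :
    norm1wV w (restrictTo x S) = ∑ j ∈ S, w j * ‖x j‖ := by
  simp only [norm1wV, restrictTo, apply_ite norm, norm_zero, mul_ite, mul_zero, sum_ite_mem,
    univ_inter]

lemma norm1wV_restrictTo_add_compl (w : Fin N → ℝ) (x : Fin N → V) (S : Finset (Fin N)) :
    norm1wV w (restrictTo x S) + norm1wV w (restrictTo x Sᶜ) = norm1wV w x := by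
  rw [norm1wV_restrictTo, norm1wV_restrictTo, sum_add_sum_compl]
  rfl

lemma norm1wV_nonneg {w : Fin N → ℝ} (hw : ∀ j, 0 ≤ w j) (x : Fin N → V) :
    0 ≤ norm1wV w x :=
  sum_nonneg fun j _ => mul_nonneg (hw j) (norm_nonneg _)

lemma norm1wV_restrictTo_le_sqrt_wCard_mul (w : Fin N → ℝ) (x : Fin N → V) (S : Finset (Fin N)) :
    norm1wV w (restrictTo x S) ≤ √(wCard w S) * norm2V (restrictTo x S) := by
  rw [norm1wV_restrictTo, norm2V_restrictTo]
  exact Real.sum_mul_le_sqrt_mul_sqrt S w fun j => ‖x j‖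

lemma norm1wV_restrictTo_le_norm1wV {w : Fin N → ℝ} (hw : ∀ j, 0 ≤ w j) (x : Fin N → V)
    (S : Finset (Fin N)) : norm1wV w (restrictTo x S) ≤ norm1wV w x := by
  rw [← norm1wV_restrictTo_add_compl w x S]
  linarith [norm1wV_nonneg hw (restrictTo x Sᶜ)]

lemma norm1wV_restrictTo_compl_sub_le {w : Fin N → ℝ} (hw : ∀ j, 0 ≤ w j)
    (z x : Fin N → V) (S : Finset (Fin N)) :
    norm1wV w (restrictTo (z - x) Sᶜ) ≤
      norm1wV w z - norm1wV w x + 2 * norm1wV w (restrictTo x Sᶜ)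
        + norm1wV w (restrictTo (z - x) S) := by
  have hSc : ∑ j ∈ Sᶜ, w j * ‖z j - x j‖ ≤ ∑ j ∈ Sᶜ, (w j * ‖z j‖ + w j * ‖x j‖) :=
    sum_le_sum fun j _ => by
      rw [← mul_add]
      exact mul_le_mul_of_nonneg_left (norm_sub_le _ _) (hw j)
  have hS : ∑ j ∈ S, w j * ‖x j‖ ≤ ∑ j ∈ S, (w j * ‖z j‖ + w j * ‖z j - x j‖) :=
    sum_le_sum fun j _ => by
      rw [← mul_add]
      exact mul_le_mul_of_nonneg_left (norm_le_norm_add_norm_sub _ _) (hw j)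
  rw [sum_add_distrib] at hSc hS
  have hz := norm1wV_restrictTo_add_compl w z S
  have hx := norm1wV_restrictTo_add_compl w x S
  simp only [norm1wV_restrictTo, Pi.sub_apply] at hz hx ⊢
  linarith

lemma exists_wCard_le_norm2V_restrictTo_compl_le {w : Fin N → ℝ} (hw : ∀ j, 0 < w j)
    {k : ℝ} (hk : 0 < k) (v : Fin N → V) :
    ∃ S : Finset (Fin N), wCard w S ≤ k ∧
      norm2V (restrictTo v Sᶜ) ≤ norm1wV w v / √k := by
  set T := norm1wV w v
  have hT : 0 ≤ T := norm1wV_nonneg (fun j => (hw j).le) v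
  set t := T / k
  have ht : 0 ≤ t := div_nonneg hT hk.le
  have hTt : T = t * k := (div_mul_cancel₀ T hk.ne').symm
  have hsub (S : Finset (Fin N)) : ∑ j ∈ S, w j * ‖v j‖ ≤ T := by
    simpa only [norm1wV_restrictTo] using
      norm1wV_restrictTo_le_norm1wV (fun j => (hw j).le) v S
  set S := univ.filter fun j => t * w j < ‖v j‖
  refine ⟨S, ?_, ?_⟩
  · rcases S.eq_empty_or_nonempty with hS | hS
    · simp [hS, wCard, hk.le]
    have hlt : t * wCard w S < t * k := by
      calc t * wCard w S = ∑ j ∈ S, t * w j * w j := by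
            rw [wCard, mul_sum]; exact sum_congr rfl fun j _ => by ring
        _ < ∑ j ∈ S, ‖v j‖ * w j :=
            sum_lt_sum_of_nonempty hS fun j hj =>
              mul_lt_mul_of_pos_right (mem_filter.mp hj).2 (hw j)
        _ = ∑ j ∈ S, w j * ‖v j‖ := sum_congr rfl fun j _ => mul_comm _ _
        _ ≤ t * k := hTt ▸ hsub S
    exact (lt_of_mul_lt_mul_left hlt ht).le
  · have hsq : ∑ j ∈ Sᶜ, ‖v j‖ ^ 2 ≤ T ^ 2 / k := by
      calc _ ≤ ∑ j ∈ Sᶜ, t * (w j * ‖v j‖) :=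
            sum_le_sum fun j hj => by
              have hj : ‖v j‖ ≤ t * w j := by simpa [S] using hj
              nlinarith [norm_nonneg (v j)]
        _ ≤ t * T := by rw [← mul_sum]; exact mul_le_mul_of_nonneg_left (hsub _) ht
        _ = T ^ 2 / k := by rw [hTt]; field_simp
    rw [norm2V_restrictTo, ← Real.sqrt_sq hT, ← Real.sqrt_div' _ hk.le]
    exact Real.sqrt_le_sqrt hsq

lemma exists_sigmaK_eq (w : Fin N → ℝ) {k : ℝ} (hk : 0 ≤ k) (x : Fin N → V) :
    ∃ S : Finset (Fin N), wCard w S ≤ k ∧ sigmaK w k x = norm1wV w (restrictTo x Sᶜ) := by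
  set 𝒮 := {t : ℝ | ∃ S : Finset (Fin N), wCard w S ≤ k ∧ t = norm1wV w (restrictTo x Sᶜ)}
  have hne : 𝒮.Nonempty := ⟨_, ∅, by simp [wCard, hk], rfl⟩
  have hfin : 𝒮.Finite :=
    (Set.finite_range fun S : Finset (Fin N) => norm1wV w (restrictTo x Sᶜ)).subset
      fun _ ⟨S, _, ht⟩ => ⟨S, ht.symm⟩
  exact hne.csInf_mem hfin

end Norms

lemma matVec_sub {V : Type*} [NormedAddCommGroup V] [NormedSpace ℝ V] {m N : ℕ}
    (A : Matrix (Fin m) (Fin N) ℝ) (x y : Fin N → V) :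
    matVec A (x - y) = matVec A x - matVec A y := by
  funext i
  simp only [matVec, Pi.sub_apply, smul_sub, sum_sub_distrib]

lemma norm2V_matVec_sub_le {V : Type*} [NormedAddCommGroup V] [NormedSpace ℝ V] {m N : ℕ}
    (A : Matrix (Fin m) (Fin N) ℝ) (x y : Fin N → V) (f : Fin m → V) :
    norm2V (matVec A (x - y)) ≤
      norm2V (fun i => matVec A x i - f i) + norm2V (fun i => matVec A y i - f i) := by
  have hsplit : matVec A (x - y) =
      (fun i => matVec A x i - f i) - fun i => matVec A y i - f i := by
    rw [matVec_sub]
    funext i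
    simp only [Pi.sub_apply, sub_sub_sub_cancel_right]
  exact hsplit ▸ norm2V_sub_le _ _

namespace WRNSP

variable {V : Type*} [NormedAddCommGroup V] [NormedSpace ℝ V] {m N : ℕ}
  {A : Matrix (Fin m) (Fin N) ℝ} {W : Set V} {k : ℝ} {w : Fin N → ℝ} {ρ γ : ℝ}

lemma norm1wV_restrictTo_le (hA : WRNSP A W k w ρ γ) (hk : 0 < k) {v : Fin N → V}
    (hv : ∀ j, v j ∈ W) {S : Finset (Fin N)} (hS : wCard w S ≤ k) :
    norm1wV w (restrictTo v S) ≤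
      ρ * norm1wV w (restrictTo v Sᶜ) + √k * γ * norm2V (matVec A v) := by
  have hsk : 0 < √k := Real.sqrt_pos.mpr hk
  calc norm1wV w (restrictTo v S) ≤ √(wCard w S) * norm2V (restrictTo v S) :=
        norm1wV_restrictTo_le_sqrt_wCard_mul w v S
    _ ≤ √k * norm2V (restrictTo v S) :=
        mul_le_mul_of_nonneg_right (Real.sqrt_le_sqrt hS) (norm2V_nonneg _)
    _ ≤ √k * (ρ / √k * norm1wV w (restrictTo v Sᶜ) + γ * norm2V (matVec A v)) :=
        mul_le_mul_of_nonneg_left (hA v hv S hS) hsk.le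
    _ = ρ * norm1wV w (restrictTo v Sᶜ) + √k * γ * norm2V (matVec A v) := by
        field_simp

lemma norm1wV_sub_le (hA : WRNSP A W k w ρ γ) (hw : ∀ j, 0 ≤ w j) (hk : 0 < k)
    (hρ0 : 0 ≤ ρ) (hρ1 : ρ ≤ 1) {z x : Fin N → V} (hv : ∀ j, z j - x j ∈ W)
    {S : Finset (Fin N)} (hS : wCard w S ≤ k) :
    (1 - ρ) * norm1wV w (z - x) ≤
      (1 + ρ) * (norm1wV w z - norm1wV w x + 2 * norm1wV w (restrictTo x Sᶜ))
        + 2 * γ * √k * norm2V (matVec A (z - x)) := by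
  have hin := hA.norm1wV_restrictTo_le (v := z - x) hk hv hS
  have hcone := norm1wV_restrictTo_compl_sub_le hw z x S
  rw [← norm1wV_restrictTo_add_compl w (z - x) S]
  have h1 : 0 ≤ 1 - ρ := by linarith
  have h2 : 0 ≤ 1 + ρ := by linarith
  nlinarith [mul_le_mul_of_nonneg_left hin h1, mul_le_mul_of_nonneg_left hcone h2]

lemma norm2V_le (hA : WRNSP A W k w ρ γ) (hw : ∀ j, 0 < w j) (hk : 0 < k) (hρ0 : 0 ≤ ρ)
    {v : Fin N → V} (hv : ∀ j, v j ∈ W) :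
    norm2V v ≤ (1 + ρ) / √k * norm1wV w v + γ * norm2V (matVec A v) := by
  obtain ⟨S, hS, htail⟩ := exists_wCard_le_norm2V_restrictTo_compl_le hw hk v
  have hhead := hA v hv S hS
  have hSc : ρ / √k * norm1wV w (restrictTo v Sᶜ) ≤ ρ / √k * norm1wV w v :=
    mul_le_mul_of_nonneg_left (norm1wV_restrictTo_le_norm1wV (fun j => (hw j).le) v Sᶜ)
      (by positivity)
  have hsplit := norm2V_add_le (restrictTo v S) (restrictTo v Sᶜ)
  rw [restrictTo_add_restrictTo_compl] at hsplit
  have hcoef : (1 + ρ) / √k * norm1wV w v = ρ / √k * norm1wV w v + norm1wV w v / √k := by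
    ring
  linarith

theorem norm2V_sub_le (hA : WRNSP A W k w ρ γ) (hw : ∀ j, 0 < w j) (hk : 0 < k)
    (hρ0 : 0 ≤ ρ) (hρ1 : ρ < 1) {z x : Fin N → V} (hv : ∀ j, z j - x j ∈ W)
    {S : Finset (Fin N)} (hS : wCard w S ≤ k) :
    norm2V (z - x) ≤
      (1 + ρ) ^ 2 / (1 - ρ) / √k
          * (2 * norm1wV w (restrictTo x Sᶜ) + (norm1wV w z - norm1wV w x))
        + (3 + ρ) * γ / (1 - ρ) * norm2V (matVec A (z - x)) := by
  have hsk : 0 < √k := Real.sqrt_pos.mpr hk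
  have h1ρ : 0 < 1 - ρ := by linarith
  have hl2 := hA.norm2V_le (v := z - x) hw hk hρ0 hv
  have hl1 := hA.norm1wV_sub_le (fun j => (hw j).le) hk hρ0 hρ1.le hv hS
  rw [← mul_le_mul_iff_of_pos_left (mul_pos h1ρ hsk)]
  have hl2' := mul_le_mul_of_nonneg_left hl2 (mul_pos h1ρ hsk).le
  have hl1' := mul_le_mul_of_nonneg_left hl1 (by linarith : (0 : ℝ) ≤ 1 + ρ)
  field_simp at hl2' ⊢
  nlinarith

end WRNSP

theorem wrNSP_error_bound_l2_general
    {V : Type*} [NormedAddCommGroup V] [NormedSpace ℝ V]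
    (W : Subspace ℝ V)
    {m N : ℕ} (A : Matrix (Fin m) (Fin N) ℝ)
    (w : Fin N → ℝ) (hw : ∀ j, 0 < w j)
    (k : ℝ) (hk : 0 < k)
    (ρ γ : ℝ) (hρ0 : 0 ≤ ρ) (hρ1 : ρ < 1) (hγ : 0 < γ)
    (hA : WRNSP A (W : Set V) k w ρ γ)
    (x : Fin N → V) (hx : ∀ j, x j ∈ W)
    (f : Fin m → V)
    (e : Fin m → V) (he : e = fun i => matVec A x i - f i)
    (lam : ℝ) (hlam0 : 0 < lam)
    (hlam : lam ≤ (1 + ρ) ^ 2 / ((3 + ρ) * γ * Real.sqrt k))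
    (G : (Fin N → V) → ℝ)
    (hG : ∀ z, G z = lam * norm1wV w z + norm2V (fun i => matVec A z i - f i))
    (xt : Fin N → V) (hxt : ∀ j, xt j ∈ W) :
    norm2V (fun j => xt j - x j) ≤
      (1 + ρ) ^ 2 / (1 - ρ) / Real.sqrt k
          * (2 * sigmaK w k x + (G xt - G x) / lam)
        + ((1 + ρ) ^ 2 / (1 - ρ) / (Real.sqrt k * lam) + (3 + ρ) * γ / (1 - ρ)) * norm2V e := by
  obtain ⟨S, hS, hσ⟩ := exists_sigmaK_eq w hk.le x
  have h1ρ : 0 < 1 - ρ := by linarith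
  set r := norm2V fun i => matVec A xt i - f i
  have hbound := hA.norm2V_sub_le hw hk hρ0 hρ1 (fun j => W.sub_mem (hxt j) (hx j)) hS
  have hresidual : norm2V (matVec A (xt - x)) ≤ r + norm2V e :=
    he ▸ norm2V_matVec_sub_le A xt x f
  have hgap : norm1wV w xt - norm1wV w x = (G xt - G x + norm2V e - r) / lam := by
    rw [hG, hG, ← he]
    field_simp
    ring
  have hcoef : (3 + ρ) * γ / (1 - ρ) ≤ (1 + ρ) ^ 2 / (1 - ρ) / (√k * lam) := by
    have hlam' := (le_div_iff₀ (by positivity : 0 < (3 + ρ) * γ * √k)).mp hlam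
    calc (3 + ρ) * γ / (1 - ρ) = lam * ((3 + ρ) * γ * √k) / (1 - ρ) / (√k * lam) := by
          field_simp
      _ ≤ (1 + ρ) ^ 2 / (1 - ρ) / (√k * lam) := by gcongr
  calc norm2V (xt - x)
      ≤ (1 + ρ) ^ 2 / (1 - ρ) / √k * (2 * sigmaK w k x + (norm1wV w xt - norm1wV w x))
          + (3 + ρ) * γ / (1 - ρ) * norm2V (matVec A (xt - x)) := hσ ▸ hbound
    _ ≤ (1 + ρ) ^ 2 / (1 - ρ) / √k * (2 * sigmaK w k x + (norm1wV w xt - norm1wV w x))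
          + (3 + ρ) * γ / (1 - ρ) * (r + norm2V e) := by gcongr
    _ = (1 + ρ) ^ 2 / (1 - ρ) / √k * (2 * sigmaK w k x + (G xt - G x) / lam)
          + ((1 + ρ) ^ 2 / (1 - ρ) / (√k * lam) + (3 + ρ) * γ / (1 - ρ)) * norm2V e
          - ((1 + ρ) ^ 2 / (1 - ρ) / (√k * lam) - (3 + ρ) * γ / (1 - ρ)) * r := by
        rw [hgap]
        ring
    _ ≤ _ := by linarith [mul_nonneg (sub_nonneg.mpr hcoef) (norm2V_nonneg _ : 0 ≤ r)]

/-- Lemma 6.1 (weighted rNSP implies error bounds for inexact minimizers), `ℓ²`-bound. -/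
theorem wrNSP_error_bound_l2
    {V : Type*} [NormedAddCommGroup V] [NormedSpace ℝ V] [CompleteSpace V]
    (W : Subspace ℝ V) (hWclosed : IsClosed (W : Set V))
    {m N : ℕ} (A : Matrix (Fin m) (Fin N) ℝ)
    (w : Fin N → ℝ) (hw : ∀ j, 0 < w j)
    (k : ℝ) (hk : 0 < k)
    (ρ γ : ℝ) (hρ0 : 0 ≤ ρ) (hρ1 : ρ < 1) (hγ : 0 < γ)
    (hA : WRNSP A (W : Set V) k w ρ γ)
    (x : Fin N → V) (hx : ∀ j, x j ∈ W)
    (f : Fin m → V)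
    (e : Fin m → V) (he : e = fun i => matVec A x i - f i)
    (lam : ℝ) (hlam0 : 0 < lam)
    (hlam : lam ≤ (1 + ρ) ^ 2 / ((3 + ρ) * γ * Real.sqrt k))
    (G : (Fin N → V) → ℝ)
    (hG : ∀ z, G z = lam * norm1wV w z + norm2V (fun i => matVec A z i - f i))
    (xt : Fin N → V) (hxt : ∀ j, xt j ∈ W) :
    norm2V (fun j => xt j - x j) ≤
      (1 + ρ) ^ 2 / (1 - ρ) / Real.sqrt k
          * (2 * sigmaK w k x + (G xt - G x) / lam)
        + ((1 + ρ) ^ 2 / (1 - ρ) / (Real.sqrt k * lam) + (3 + ρ) * γ / (1 - ρ)) * norm2V e :=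
  wrNSP_error_bound_l2_general W A w hw k hk ρ γ hρ0 hρ1 hγ hA x hx f e he lam hlam0 hlam G hG xt
    hxt
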